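/- arXiv:1904.05623 — 4 statements merged into one kernel-verified Lean document; each statement's English description precedes it below -/
import Mathlib

section
/- Let n, k, r, ρ be positive integers with (r+ρ-1) dividing n, k+1 ≤ n, and let μ = n/(r+ρ-1). Let R_1,…,R_μ be a partition of {1,…,n} into sets of size r+ρ-1, and let S_{k+1} = { S ⊆ {1,…,n} : |S| = k+1 and |S ∩ R_i| ≤ r for all i }. Then C(n,k+1) - |S_{k+1}| ≤ μ(ρ-1)·((k+1)/n)^{r+1}·C(n,k+1)·C(r+ρ-1, ξ), where ξ = min{ρ-2, ⌊(r+ρ-1)/2⌋}. -/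
/-!
A `(k+1)`-set violating the constraint contains `r+1` points of some group `R i`, hence contains
some `(r+1)`-subset `T ⊆ R i`. A union bound over the groups and over such `T` gives at most
`μ · C(m, r+1) · C(n-r-1, k-r)` bad sets, where `m = r+ρ-1`. Removing `j` fixed points shrinks
`C(n, k+1)` at each step by a factor `(k+1-i)/(n-i) ≤ (k+1)/n`, and
`C(m, r+1) = C(m, ρ-2) ≤ C(m, ξ)` by unimodality; the factor `ρ - 1 ≥ 1` is slack.
-/

open Finset

theorem Nat.cast_choose_sub_sub_le {n m j : ℕ} (hmn : m ≤ n) (hjm : j ≤ m) :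
    ((n - j).choose (m - j) : ℝ) ≤ ((m : ℝ) / n) ^ j * n.choose m := by
  induction j with
  | zero => simp
  | succ j ih =>
    have hjn : j < n := by omega
    have hstep : ((n - j : ℕ) : ℝ) * (n - (j + 1)).choose (m - (j + 1)) =
        ((m - j : ℕ) : ℝ) * (n - j).choose (m - j) := by
      have h := Nat.add_one_mul_choose_eq (n - (j + 1)) (m - (j + 1))
      rw [show n - (j + 1) + 1 = n - j by omega, show m - (j + 1) + 1 = m - j by omega] at h
      exact_mod_cast h.trans (mul_comm _ _)
    have hratio : ((m - j : ℕ) : ℝ) / (n - j : ℕ) ≤ m / n := by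
      have hnj : (0 : ℝ) < (n - j : ℕ) := by exact_mod_cast Nat.sub_pos_of_lt hjn
      have hn : (0 : ℝ) < n := by exact_mod_cast (show 0 < n by omega)
      rw [div_le_div_iff₀ hnj hn, Nat.cast_sub (by omega), Nat.cast_sub hjn.le]
      nlinarith [(Nat.cast_le (α := ℝ)).mpr hmn, (Nat.cast_nonneg j : (0 : ℝ) ≤ j)]
    calc ((n - (j + 1)).choose (m - (j + 1)) : ℝ)
        = ((m - j : ℕ) : ℝ) / (n - j : ℕ) * (n - j).choose (m - j) := by
          rw [div_mul_eq_mul_div, eq_div_iff (by norm_cast; omega), mul_comm, hstep]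
      _ ≤ m / n * (((m : ℝ) / n) ^ j * n.choose m) := by
          gcongr
          exact ih (by omega)
      _ = ((m : ℝ) / n) ^ (j + 1) * n.choose m := by ring

theorem Nat.choose_le_choose_min_half (n t : ℕ) : n.choose t ≤ n.choose (min t (n / 2)) := by
  rcases le_total t (n / 2) with h | h
  · rw [min_eq_left h]
  · rw [min_eq_right h]
    exact Nat.choose_le_middle t n

theorem Nat.choose_succ_le_choose_min_half {r ρ : ℕ} (hρ : 2 ≤ ρ) :
    (r + ρ - 1).choose (r + 1) ≤ (r + ρ - 1).choose (min (ρ - 2) ((r + ρ - 1) / 2)) :=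
  (Nat.choose_symm_of_eq_add (a := r + 1) (b := ρ - 2) (by omega)).trans_le
    (Nat.choose_le_choose_min_half _ _)

theorem Finset.card_le_card_filter_forall_add_sum {ι β : Type*} [Fintype ι] [DecidableEq β]
    (A : Finset β) (P : ι → β → Prop) [∀ i, DecidablePred (P i)]
    [DecidablePred fun a => ∀ i, P i a] :
    #A ≤ #{a ∈ A | ∀ i, P i a} + ∑ i, #{a ∈ A | ¬ P i a} := by
  have hcover : A ⊆ {a ∈ A | ∀ i, P i a} ∪ univ.biUnion fun i => {a ∈ A | ¬ P i a} := by
    intro a ha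
    by_cases h : ∀ i, P i a
    · exact mem_union_left _ (mem_filter.mpr ⟨ha, h⟩)
    · obtain ⟨i, hi⟩ := not_forall.mp h
      exact mem_union_right _ (mem_biUnion.mpr ⟨i, mem_univ i, mem_filter.mpr ⟨ha, hi⟩⟩)
  calc #A ≤ #({a ∈ A | ∀ i, P i a} ∪ univ.biUnion fun i => {a ∈ A | ¬ P i a}) :=
        card_le_card hcover
    _ ≤ _ := (card_union_le _ _).trans (Nat.add_le_add_left card_biUnion_le _)

section Supersets

variable {α : Type*} [Fintype α] [DecidableEq α]

theorem Finset.card_filter_subset_powersetCard_le (T : Finset α) (s : ℕ) :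
    #{S ∈ powersetCard s (univ : Finset α) | T ⊆ S} ≤
      (Fintype.card α - #T).choose (s - #T) := by
  have hsub : {S ∈ powersetCard s (univ : Finset α) | T ⊆ S} ⊆
      (powersetCard (s - #T) Tᶜ).image (· ∪ T) := by
    intro S hS
    rw [mem_filter, mem_powersetCard] at hS
    refine mem_image.mpr ⟨S \ T, mem_powersetCard.mpr ⟨?_, ?_⟩, sdiff_union_of_subset hS.2⟩
    · exact sdiff_subset_sdiff hS.1.1 subset_rfl |>.trans (by rw [compl_eq_univ_sdiff])
    · rw [card_sdiff_of_subset hS.2, hS.1.2]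
  calc _ ≤ #((powersetCard (s - #T) Tᶜ).image (· ∪ T)) := card_le_card hsub
    _ ≤ _ := card_image_le.trans (by rw [card_powersetCard, card_compl])

theorem Finset.card_filter_lt_card_inter_le (R : Finset α) (r s : ℕ) :
    #{S ∈ powersetCard s (univ : Finset α) | r < #(S ∩ R)} ≤
      (#R).choose (r + 1) * (Fintype.card α - (r + 1)).choose (s - (r + 1)) := by
  have hsub : {S ∈ powersetCard s (univ : Finset α) | r < #(S ∩ R)} ⊆
      (powersetCard (r + 1) R).biUnion
        fun T => {S ∈ powersetCard s (univ : Finset α) | T ⊆ S} := by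
    intro S hS
    rw [mem_filter] at hS
    obtain ⟨T, hTS, hT⟩ := exists_subset_card_eq hS.2
    exact mem_biUnion.mpr ⟨T, mem_powersetCard.mpr ⟨hTS.trans inter_subset_right, hT⟩,
      mem_filter.mpr ⟨hS.1, hTS.trans inter_subset_left⟩⟩
  calc _ ≤ _ := card_le_card hsub
    _ ≤ ∑ T ∈ powersetCard (r + 1) R, #{S ∈ powersetCard s (univ : Finset α) | T ⊆ S} :=
        card_biUnion_le
    _ ≤ ∑ _T ∈ powersetCard (r + 1) R, (Fintype.card α - (r + 1)).choose (s - (r + 1)) := by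
        refine sum_le_sum fun T hT => ?_
        simpa only [(mem_powersetCard.mp hT).2] using card_filter_subset_powersetCard_le T s
    _ = _ := by rw [sum_const, card_powersetCard, smul_eq_mul]

theorem Finset.cast_card_filter_lt_card_inter_le (R : Finset α) (r : ℕ) {s : ℕ}
    (hs : s ≤ Fintype.card α) :
    (#{S ∈ powersetCard s (univ : Finset α) | r < #(S ∩ R)} : ℝ) ≤
      (#R).choose (r + 1) *
        (((s : ℝ) / Fintype.card α) ^ (r + 1) * (Fintype.card α).choose s) := by
  by_cases hrs : s ≤ r
  · have hempty : {S ∈ powersetCard s (univ : Finset α) | r < #(S ∩ R)} = ∅ := by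
      refine filter_false_of_mem fun S hS => ?_
      have := card_le_card (inter_subset_left (s₁ := S) (s₂ := R))
      rw [(mem_powersetCard.mp hS).2] at this
      omega
    rw [hempty, card_empty, Nat.cast_zero]
    positivity
  · calc _ ≤ ((#R).choose (r + 1) * (Fintype.card α - (r + 1)).choose (s - (r + 1)) : ℝ) := by
          exact_mod_cast card_filter_lt_card_inter_le R r s
      _ ≤ _ := by
          gcongr
          exact Nat.cast_choose_sub_sub_le hs (by omega)

end Supersets

theorem pmds_S_k1_complement_bound_general (n k r ρ μ : ℕ)
    (hρ : 2 ≤ ρ)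
    (hkn : k + 1 ≤ n)
    (R : Fin μ → Finset (Fin n))
    (hsize : ∀ i, (R i).card = r + ρ - 1) :
    (Nat.choose n (k + 1) : ℝ) -
      ((Finset.univ : Finset (Finset (Fin n))).filter
        (fun S => S.card = k + 1 ∧ ∀ i, (S ∩ R i).card ≤ r)).card ≤
      (μ : ℝ) * ((ρ : ℝ) - 1) * (((k : ℝ) + 1) / n) ^ (r + 1) *
        (Nat.choose n (k + 1) : ℝ) *
        (Nat.choose (r + ρ - 1) (min (ρ - 2) ((r + ρ - 1) / 2)) : ℝ) := by
  set m := r + ρ - 1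
  set A := powersetCard (k + 1) (univ : Finset (Fin n))
  set c : ℝ := (((k : ℝ) + 1) / n) ^ (r + 1) * n.choose (k + 1)
  have hgood : univ.filter (fun S : Finset (Fin n) => #S = k + 1 ∧ ∀ i, #(S ∩ R i) ≤ r) =
      {S ∈ A | ∀ i, #(S ∩ R i) ≤ r} := by
    ext S
    simp [A, mem_powersetCard]
  have hA : #A = n.choose (k + 1) := by simp [A]
  have hunion : n.choose (k + 1) ≤
      #{S ∈ A | ∀ i, #(S ∩ R i) ≤ r} + ∑ i, #{S ∈ A | r < #(S ∩ R i)} := by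
    simpa only [hA, not_le] using
      card_le_card_filter_forall_add_sum A fun i S => #(S ∩ R i) ≤ r
  have hgroup (i : Fin μ) : (#{S ∈ A | r < #(S ∩ R i)} : ℝ) ≤ m.choose (r + 1) * c := by
    simpa [hsize i] using
      cast_card_filter_lt_card_inter_le (R i) r (s := k + 1) (by simpa using hkn)
  have hbinom :
      (m.choose (r + 1) : ℝ) ≤ ((ρ : ℝ) - 1) * m.choose (min (ρ - 2) (m / 2)) := by
    have hρ' : (1 : ℝ) ≤ (ρ : ℝ) - 1 := by
      rw [le_sub_iff_add_le]
      exact_mod_cast hρ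
    exact (le_mul_of_one_le_left (Nat.cast_nonneg _) hρ').trans'
      (by exact_mod_cast Nat.choose_succ_le_choose_min_half hρ)
  rw [hgood]
  calc _ ≤ ∑ i, (#{S ∈ A | r < #(S ∩ R i)} : ℝ) := by
        rw [sub_le_iff_le_add']
        exact_mod_cast hunion
    _ ≤ ∑ _i : Fin μ, m.choose (r + 1) * c := sum_le_sum fun i _ => hgroup i
    _ = μ * m.choose (r + 1) * c := by
        rw [sum_const, card_univ, Fintype.card_fin, nsmul_eq_mul, mul_assoc]
    _ ≤ μ * (((ρ : ℝ) - 1) * m.choose (min (ρ - 2) (m / 2))) * c := by gcongr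
    _ = _ := by ring

theorem pmds_S_k1_complement_bound (n k r ρ μ : ℕ)
    (hn : 0 < n) (hk : 0 < k) (hr : 0 < r) (hρ : 2 ≤ ρ)
    (hdvd : (r + ρ - 1) ∣ n) (hμ : μ = n / (r + ρ - 1)) (hkn : k + 1 ≤ n)
    (R : Fin μ → Finset (Fin n))
    (hcover : Finset.univ.biUnion R = Finset.univ)
    (hdisj : ∀ i j, i ≠ j → Disjoint (R i) (R j))
    (hsize : ∀ i, (R i).card = r + ρ - 1) :
    (Nat.choose n (k + 1) : ℝ) -
      ((Finset.univ : Finset (Finset (Fin n))).filter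
        (fun S => S.card = k + 1 ∧ ∀ i, (S ∩ R i).card ≤ r)).card ≤
      (μ : ℝ) * ((ρ : ℝ) - 1) * (((k : ℝ) + 1) / n) ^ (r + 1) *
        (Nat.choose n (k + 1) : ℝ) *
        (Nat.choose (r + ρ - 1) (min (ρ - 2) ((r + ρ - 1) / 2)) : ℝ) :=
  pmds_S_k1_complement_bound_general n k r ρ μ hρ hkn R hsize
end

section
/- Under the assumptions of the previous lemma, |S_{k+1}|/C(n,k+1) ≥ 1 - n·(C(r+ρ-1,ξ)^{1/(r+1)}·(k+1)/n)^{r+1}. -/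
open Finset

private lemma tri_choose {n k r : ℕ} (hrk : r ≤ k) (hkn : k ≤ n) :
    n.choose k * k.choose r = n.choose r * (n - r).choose (k - r) := by
  have hrn : r ≤ n := hrk.trans hkn
  have h1 := Nat.choose_mul_factorial_mul_factorial hkn
  have h2 := Nat.choose_mul_factorial_mul_factorial hrk
  have h3 := Nat.choose_mul_factorial_mul_factorial (Nat.sub_le_sub_right hkn r)
  have h4 : n - r - (k - r) = n - k := by omega
  have h5 := Nat.choose_mul_factorial_mul_factorial hrn
  rw [h4] at h3
  have hpos : 0 < Nat.factorial r * (Nat.factorial (k - r) * Nat.factorial (n - k)) := by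
    positivity
  apply Nat.eq_of_mul_eq_mul_right hpos
  calc n.choose k * k.choose r * (r.factorial * ((k - r).factorial * (n - k).factorial))
      = (k.choose r * r.factorial * (k - r).factorial) * (n.choose k * (n - k).factorial) := by
        ring
    _ = k.factorial * (n.choose k * (n - k).factorial) := by rw [h2]
    _ = n.choose k * k.factorial * (n - k).factorial := by ring
    _ = n.factorial := h1
    _ = n.choose r * r.factorial * (n - r).factorial := h5.symm
    _ = ((n - r).choose (k - r) * (k - r).factorial * (n - k).factorial) *
          (n.choose r * r.factorial) := by rw [h3]; ring
    _ = n.choose r * (n - r).choose (k - r) *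
          (r.factorial * ((k - r).factorial * (n - k).factorial)) := by ring

private lemma descC {n k r : ℕ} (hkn : k + 1 ≤ n) :
    (k + 1).choose (r + 1) * n ^ (r + 1) ≤ n.choose (r + 1) * (k + 1) ^ (r + 1) := by
  have key : (k + 1).descFactorial (r + 1) * n ^ (r + 1) ≤
      n.descFactorial (r + 1) * (k + 1) ^ (r + 1) := by
    have en : n ^ (r + 1) = ∏ _i ∈ Finset.range (r + 1), n := by simp
    have ek : (k + 1) ^ (r + 1) = ∏ _i ∈ Finset.range (r + 1), (k + 1) := by simp
    rw [Nat.descFactorial_eq_prod_range, Nat.descFactorial_eq_prod_range, en, ek,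
      ← Finset.prod_mul_distrib, ← Finset.prod_mul_distrib]
    apply Finset.prod_le_prod'
    intro i _
    have h : i * (k + 1) ≤ i * n := Nat.mul_le_mul_left _ hkn
    calc (k + 1 - i) * n = (k + 1) * n - i * n := Nat.sub_mul _ _ _
      _ ≤ (k + 1) * n - i * (k + 1) := Nat.sub_le_sub_left h _
      _ = n * (k + 1) - i * (k + 1) := by rw [mul_comm (k + 1) n]
      _ = (n - i) * (k + 1) := (Nat.sub_mul _ _ _).symm
  have e1 := Nat.descFactorial_eq_factorial_mul_choose (k + 1) (r + 1)
  have e2 := Nat.descFactorial_eq_factorial_mul_choose n (r + 1)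
  rw [e1, e2] at key
  have := (r + 1).factorial_pos
  apply Nat.le_of_mul_le_mul_left _ this
  calc (r + 1).factorial * ((k + 1).choose (r + 1) * n ^ (r + 1))
      = (r + 1).factorial * (k + 1).choose (r + 1) * n ^ (r + 1) := by ring
    _ ≤ (r + 1).factorial * n.choose (r + 1) * (k + 1) ^ (r + 1) := key
    _ = (r + 1).factorial * (n.choose (r + 1) * (k + 1) ^ (r + 1)) := by ring

private lemma card_superset {n k r : ℕ} (hrk : r ≤ k) (A : Finset (Fin n))
    (hA : A.card = r + 1) :
    ((Finset.powersetCard (k + 1) (Finset.univ : Finset (Fin n))).filter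
      (fun S => A ⊆ S)).card = (n - (r + 1)).choose (k - r) := by
  have himg : ((Finset.powersetCard (k + 1) (Finset.univ : Finset (Fin n))).filter
      (fun S => A ⊆ S)) = (Finset.powersetCard (k - r) Aᶜ).image (fun B => A ∪ B) := by
    ext S
    simp only [Finset.mem_filter, Finset.mem_powersetCard, Finset.mem_image]
    constructor
    · rintro ⟨⟨-, hcard⟩, hAS⟩
      refine ⟨S \ A, ⟨?_, ?_⟩, ?_⟩
      · intro x hx
        simp only [Finset.mem_compl]
        exact (Finset.mem_sdiff.mp hx).2
      · rw [Finset.card_sdiff_of_subset hAS, hcard, hA]; omega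
      · exact Finset.union_sdiff_of_subset hAS
    · rintro ⟨B, ⟨hBc, hBcard⟩, rfl⟩
      have hdisj : Disjoint A B := by
        rw [Finset.disjoint_left]
        intro x hxA hxB
        exact (Finset.mem_compl.mp (hBc hxB)) hxA
      refine ⟨⟨Finset.subset_univ _, ?_⟩, Finset.subset_union_left⟩
      rw [Finset.card_union_of_disjoint hdisj, hA, hBcard]; omega
  rw [himg, Finset.card_image_of_injOn, Finset.card_powersetCard]
  · congr 1
    rw [Finset.card_compl, hA, Fintype.card_fin]
  · intro B1 h1 B2 h2 he
    simp only [Finset.mem_coe, Finset.mem_powersetCard] at h1 h2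
    have d1 : Disjoint A B1 := by
      rw [Finset.disjoint_left]; intro x hxA hxB
      exact (Finset.mem_compl.mp (h1.1 hxB)) hxA
    have d2 : Disjoint A B2 := by
      rw [Finset.disjoint_left]; intro x hxA hxB
      exact (Finset.mem_compl.mp (h2.1 hxB)) hxA
    simp only at he
    have : (A ∪ B1) \ A = (A ∪ B2) \ A := by rw [he]
    rwa [Finset.union_sdiff_cancel_left d1, Finset.union_sdiff_cancel_left d2] at this
theorem pmds_S_k1_fraction_bound (n k r ρ μ : ℕ)
    (hn : 0 < n) (hk : 0 < k) (hr : 0 < r) (hρ : 2 ≤ ρ)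
    (hdvd : (r + ρ - 1) ∣ n) (hμ : μ = n / (r + ρ - 1)) (hkn : k + 1 ≤ n)
    (R : Fin μ → Finset (Fin n))
    (hcover : Finset.univ.biUnion R = Finset.univ)
    (hdisj : ∀ i j, i ≠ j → Disjoint (R i) (R j))
    (hsize : ∀ i, (R i).card = r + ρ - 1) :
    (((Finset.univ : Finset (Finset (Fin n))).filter
        (fun S => S.card = k + 1 ∧ ∀ i, (S ∩ R i).card ≤ r)).card : ℝ) /
        (Nat.choose n (k + 1) : ℝ) ≥
      1 - (n : ℝ) *
        ((Nat.choose (r + ρ - 1) (min (ρ - 2) ((r + ρ - 1) / 2)) : ℝ) ^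
            ((1 : ℝ) / ((r : ℝ) + 1)) * ((k : ℝ) + 1) / n) ^ (r + 1) := by
  classical
  set C : ℕ := Nat.choose (r + ρ - 1) (min (ρ - 2) ((r + ρ - 1) / 2)) with hC
  set T : Finset (Finset (Fin n)) := Finset.powersetCard (k + 1) Finset.univ with hTdef
  have hNpos : 0 < n.choose (k + 1) := Nat.choose_pos hkn
  have hT : T.card = n.choose (k + 1) := by
    simp [hTdef, Finset.card_powersetCard]
  have hGoodT : ((Finset.univ : Finset (Finset (Fin n))).filter
      (fun S => S.card = k + 1 ∧ ∀ i, (S ∩ R i).card ≤ r)) =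
      T.filter (fun S => ∀ i, (S ∩ R i).card ≤ r) := by
    ext S
    simp only [Finset.mem_filter, Finset.mem_univ, true_and, hTdef,
      Finset.mem_powersetCard, Finset.subset_univ]
  have hNr : (0 : ℝ) < (n.choose (k + 1) : ℝ) := by exact_mod_cast hNpos
  have hterm : (((C : ℝ) ^ ((1 : ℝ) / ((r : ℝ) + 1)) * ((k : ℝ) + 1) / n) ^ (r + 1)) =
      (C : ℝ) * (((k : ℝ) + 1) ^ (r + 1) / (n : ℝ) ^ (r + 1)) := by
    have hrpow : (((C : ℝ) ^ ((1 : ℝ) / ((r : ℝ) + 1))) ^ (r + 1)) = (C : ℝ) := by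
      rw [← Real.rpow_natCast ((C : ℝ) ^ ((1 : ℝ) / ((r : ℝ) + 1))) (r + 1),
        ← Real.rpow_mul (by positivity)]
      push_cast
      rw [one_div_mul_cancel (by positivity : (r : ℝ) + 1 ≠ 0), Real.rpow_one]
    rw [div_pow, mul_pow, hrpow]
    ring
  rw [hGoodT, hterm]
  rcases le_or_gt (k + 1) r with hkr | hrk'
  · -- trivial case: no bad sets possible
    have hGall : T.filter (fun S => ∀ i, (S ∩ R i).card ≤ r) = T := by
      apply Finset.filter_true_of_mem
      intro S hS i
      have h1 : (S ∩ R i).card ≤ S.card :=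
        Finset.card_le_card Finset.inter_subset_left
      have h2 : S.card = k + 1 := (Finset.mem_powersetCard.mp hS).2
      omega
    rw [hGall, hT, div_self hNr.ne']
    have hpos : 0 ≤ (n : ℝ) * ((C : ℝ) * (((k : ℝ) + 1) ^ (r + 1) / (n : ℝ) ^ (r + 1))) := by
      positivity
    linarith
  · have hrk : r ≤ k := by omega
    set B : Finset (Finset (Fin n)) :=
      T.filter (fun S => ¬ ∀ i, (S ∩ R i).card ≤ r) with hBdef
    have hsum : (T.filter (fun S => ∀ i, (S ∩ R i).card ≤ r)).card + B.card =
        n.choose (k + 1) := by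
      rw [← hT, hBdef]
      exact Finset.card_filter_add_card_filter_not _
    -- bound on bad sets
    have hBsub : B ⊆ (Finset.univ : Finset (Fin μ)).biUnion (fun i =>
        (Finset.powersetCard (r + 1) (R i)).biUnion
          (fun A => T.filter (fun S => A ⊆ S))) := by
      intro S hS
      rw [hBdef, Finset.mem_filter] at hS
      obtain ⟨hST, hbad⟩ := hS
      push_neg at hbad
      obtain ⟨i, hi⟩ := hbad
      obtain ⟨A, hAsub, hAcard⟩ :=
        Finset.exists_subset_card_eq (show r + 1 ≤ (S ∩ R i).card by omega)
      simp only [Finset.mem_biUnion, Finset.mem_univ, true_and]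
      exact ⟨i, A, Finset.mem_powersetCard.mpr
          ⟨hAsub.trans Finset.inter_subset_right, hAcard⟩,
        Finset.mem_filter.mpr ⟨hST, hAsub.trans Finset.inter_subset_left⟩⟩
    have hBcard : B.card ≤ μ * ((r + ρ - 1).choose (r + 1) * (n - (r + 1)).choose (k - r)) := by
      calc B.card ≤ ((Finset.univ : Finset (Fin μ)).biUnion (fun i =>
            (Finset.powersetCard (r + 1) (R i)).biUnion
              (fun A => T.filter (fun S => A ⊆ S)))).card := Finset.card_le_card hBsub
        _ ≤ ∑ i : Fin μ, ((Finset.powersetCard (r + 1) (R i)).biUnion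
              (fun A => T.filter (fun S => A ⊆ S))).card := Finset.card_biUnion_le
        _ ≤ ∑ i : Fin μ, ∑ A ∈ Finset.powersetCard (r + 1) (R i),
              (T.filter (fun S => A ⊆ S)).card :=
            Finset.sum_le_sum fun i _ => Finset.card_biUnion_le
        _ = ∑ i : Fin μ, ∑ _A ∈ Finset.powersetCard (r + 1) (R i),
              (n - (r + 1)).choose (k - r) := by
            refine Finset.sum_congr rfl fun i _ => Finset.sum_congr rfl fun A hA => ?_
            exact card_superset hrk A (Finset.mem_powersetCard.mp hA).2
        _ = μ * ((r + ρ - 1).choose (r + 1) * (n - (r + 1)).choose (k - r)) := by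
            simp only [Finset.sum_const, Finset.card_powersetCard, hsize,
              smul_eq_mul, Finset.card_univ, Fintype.card_fin, mul_assoc]
    have hCm : (r + ρ - 1).choose (r + 1) ≤ C := by
      rcases le_or_gt (r + 1) (r + ρ - 1) with h | h
      · have he : r + ρ - 1 - (r + 1) = ρ - 2 := by omega
        have hsymm := Nat.choose_symm h
        rw [← hsymm, he, hC]
        rcases le_total (ρ - 2) ((r + ρ - 1) / 2) with h2 | h2
        · rw [min_eq_left h2]
        · rw [min_eq_right h2]
          exact Nat.choose_le_middle _ _
      · rw [Nat.choose_eq_zero_of_lt h]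
        exact Nat.zero_le _
    have hkey : (n - (r + 1)).choose (k - r) * n ^ (r + 1) ≤
        n.choose (k + 1) * (k + 1) ^ (r + 1) := by
      have htri := tri_choose (show r + 1 ≤ k + 1 by omega) hkn
      have hsub : k + 1 - (r + 1) = k - r := by omega
      rw [hsub] at htri
      have hd := descC (r := r) hkn
      have hcp : 0 < n.choose (r + 1) := Nat.choose_pos (by omega)
      refine Nat.le_of_mul_le_mul_right ?_ hcp
      calc (n - (r + 1)).choose (k - r) * n ^ (r + 1) * n.choose (r + 1)
          = n.choose (r + 1) * (n - (r + 1)).choose (k - r) * n ^ (r + 1) := by ring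
        _ = n.choose (k + 1) * (k + 1).choose (r + 1) * n ^ (r + 1) := by rw [← htri]
        _ = n.choose (k + 1) * ((k + 1).choose (r + 1) * n ^ (r + 1)) := by ring
        _ ≤ n.choose (k + 1) * (n.choose (r + 1) * (k + 1) ^ (r + 1)) :=
            Nat.mul_le_mul_left _ hd
        _ = n.choose (k + 1) * (k + 1) ^ (r + 1) * n.choose (r + 1) := by ring
    have hμn : μ ≤ n := by rw [hμ]; exact Nat.div_le_self _ _
    -- cast to ℝ
    have hb : (B.card : ℝ) ≤ (μ : ℝ) * (((r + ρ - 1).choose (r + 1) : ℝ) *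
        ((n - (r + 1)).choose (k - r) : ℝ)) := by exact_mod_cast hBcard
    have hkeyR : ((n - (r + 1)).choose (k - r) : ℝ) * (n : ℝ) ^ (r + 1) ≤
        (n.choose (k + 1) : ℝ) * ((k : ℝ) + 1) ^ (r + 1) := by exact_mod_cast hkey
    have hμnR : (μ : ℝ) ≤ (n : ℝ) := by exact_mod_cast hμn
    have hCmR : (((r + ρ - 1).choose (r + 1) : ℕ) : ℝ) ≤ (C : ℝ) := by exact_mod_cast hCm
    have hnr : (0 : ℝ) < (n : ℝ) ^ (r + 1) := by positivity
    have hbound : (B.card : ℝ) * (n : ℝ) ^ (r + 1) ≤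
        (n : ℝ) * (C : ℝ) * ((k : ℝ) + 1) ^ (r + 1) * (n.choose (k + 1) : ℝ) := by
      calc (B.card : ℝ) * (n : ℝ) ^ (r + 1)
          ≤ ((μ : ℝ) * (((r + ρ - 1).choose (r + 1) : ℝ) *
              ((n - (r + 1)).choose (k - r) : ℝ))) * (n : ℝ) ^ (r + 1) :=
            mul_le_mul_of_nonneg_right hb (by positivity)
        _ = (μ : ℝ) * ((r + ρ - 1).choose (r + 1) : ℝ) *
              (((n - (r + 1)).choose (k - r) : ℝ) * (n : ℝ) ^ (r + 1)) := by ring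
        _ ≤ (n : ℝ) * (C : ℝ) *
              ((n.choose (k + 1) : ℝ) * ((k : ℝ) + 1) ^ (r + 1)) := by
            gcongr
        _ = (n : ℝ) * (C : ℝ) * ((k : ℝ) + 1) ^ (r + 1) * (n.choose (k + 1) : ℝ) := by ring
    have hX : (B.card : ℝ) / (n.choose (k + 1) : ℝ) ≤
        (n : ℝ) * ((C : ℝ) * (((k : ℝ) + 1) ^ (r + 1) / (n : ℝ) ^ (r + 1))) := by
      rw [div_le_iff₀ hNr]
      have h2 : (n : ℝ) * ((C : ℝ) * (((k : ℝ) + 1) ^ (r + 1) / (n : ℝ) ^ (r + 1))) *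
          (n.choose (k + 1) : ℝ) =
          (n : ℝ) * (C : ℝ) * ((k : ℝ) + 1) ^ (r + 1) * (n.choose (k + 1) : ℝ) /
            (n : ℝ) ^ (r + 1) := by ring
      rw [h2, le_div_iff₀ hnr]
      exact hbound
    have hg : ((T.filter (fun S => ∀ i, (S ∩ R i).card ≤ r)).card : ℝ) =
        (n.choose (k + 1) : ℝ) - (B.card : ℝ) := by
      have := hsum
      push_cast [← this]
      ring
    rw [hg, ge_iff_le, sub_div, div_self hNr.ne']
    linarith [hX]
end

section
/- Let 𝕊 be a family of (k+1)-subsets of {1,…,n} and t ≤ n-k-1. Then the fraction of t-subsets I ⊆ {1,…,n} whose complement contains some element of 𝕊, among all t-subsets, is at least |𝕊|/C(n,k+1). -/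
/-!
Double count the pairs `(S, I)` with `S ∈ 𝕊`, `#I = t` and `S ⊆ Iᶜ`. Each `S` lies in exactly
`C(n - k - 1, t)` such pairs, while each admissible `I` lies in at most `C(n - t, k + 1)` of them.
Since `C(n, t) C(n - t, k + 1) = C(n, k + 1) C(n - k - 1, t)`, this is the claimed bound.
-/

open Finset

theorem Nat.choose_mul_choose_sub_comm (n a b : ℕ) :
    n.choose a * (n - a).choose b = n.choose b * (n - b).choose a := by
  have h₁ := Nat.choose_mul (n := n) (Nat.le_add_right a b)
  have h₂ := Nat.choose_mul (n := n) (Nat.le_add_left b a)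
  rw [Nat.add_sub_cancel_left] at h₁
  rw [Nat.add_sub_cancel] at h₂
  rw [← h₁, ← h₂, Nat.choose_symm_add]

namespace Finset

variable {α : Type*} [Fintype α] [DecidableEq α]

def complSupersetsLevel (𝒮 : Finset (Finset α)) (t : ℕ) : Finset (Finset α) :=
  univ.filter fun I => #I = t ∧ ∃ S ∈ 𝒮, S ⊆ Iᶜ

variable {𝒮 : Finset (Finset α)} {r t : ℕ}

theorem filter_complSupersetsLevel_of_mem {S : Finset α} (hS : S ∈ 𝒮) :
    (complSupersetsLevel 𝒮 t).filter (S ⊆ ·ᶜ) = powersetCard t Sᶜ := by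
  ext I
  simp only [complSupersetsLevel, mem_filter, mem_univ, true_and, mem_powersetCard,
    ← subset_compl_comm (s := S)]
  exact ⟨fun ⟨⟨hI, _⟩, hSI⟩ ↦ ⟨hSI, hI⟩, fun ⟨hSI, hI⟩ ↦ ⟨⟨hI, S, hS, hSI⟩, hSI⟩⟩

theorem card_mul_choose_le_card_complSupersetsLevel_mul (h𝒮 : ∀ S ∈ 𝒮, #S = r) :
    #𝒮 * (Fintype.card α - r).choose t ≤
      #(complSupersetsLevel 𝒮 t) * (Fintype.card α - t).choose r := by
  refine card_mul_le_card_mul (fun S I ↦ S ⊆ Iᶜ) (fun S hS ↦ ?_) (fun I hI ↦ ?_)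
  · rw [bipartiteAbove, filter_complSupersetsLevel_of_mem hS, card_powersetCard, card_compl,
      h𝒮 S hS]
  · have hIt : #I = t := (mem_filter.mp hI).2.1
    calc #(𝒮.bipartiteBelow (fun S I ↦ S ⊆ Iᶜ) I) ≤ #(powersetCard r Iᶜ) :=
          card_le_card fun S hS ↦ by
            obtain ⟨hS𝒮, hSI⟩ := mem_filter.mp hS
            exact mem_powersetCard.mpr ⟨hSI, h𝒮 S hS𝒮⟩
      _ = (Fintype.card α - t).choose r := by rw [card_powersetCard, card_compl, hIt]

theorem card_mul_choose_le_card_complSupersetsLevel_mul_choose (h𝒮 : ∀ S ∈ 𝒮, #S = r)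
    (htr : t + r ≤ Fintype.card α) :
    #𝒮 * (Fintype.card α).choose t ≤ #(complSupersetsLevel 𝒮 t) * (Fintype.card α).choose r := by
  set n := Fintype.card α
  refine Nat.le_of_mul_le_mul_right ?_ (Nat.choose_pos (by omega : r ≤ n - t))
  calc #𝒮 * n.choose t * (n - t).choose r = #𝒮 * (n - r).choose t * n.choose r := by
        rw [mul_assoc, Nat.choose_mul_choose_sub_comm]; ring
    _ ≤ #(complSupersetsLevel 𝒮 t) * (n - t).choose r * n.choose r := by
        exact Nat.mul_le_mul_right _ (card_mul_choose_le_card_complSupersetsLevel_mul h𝒮)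
    _ = #(complSupersetsLevel 𝒮 t) * n.choose r * (n - t).choose r := by ring

end Finset

theorem fraction_complement_contains_bound (n k t : ℕ) (hkn : k + 1 ≤ n)
    (ht : t ≤ n - k - 1)
    (𝕊 : Finset (Finset (Fin n))) (h𝕊 : ∀ S ∈ 𝕊, S.card = k + 1) :
    (((Finset.univ : Finset (Finset (Fin n))).filter
        (fun I => I.card = t ∧ ∃ S ∈ 𝕊, S ⊆ Iᶜ)).card : ℝ) / (Nat.choose n t : ℝ) ≥
      (𝕊.card : ℝ) / (Nat.choose n (k + 1) : ℝ) := by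
  have key := card_mul_choose_le_card_complSupersetsLevel_mul_choose (t := t) h𝕊
    (by rw [Fintype.card_fin]; omega)
  rw [Fintype.card_fin] at key
  rw [ge_iff_le, div_le_div_iff₀ (by exact_mod_cast Nat.choose_pos hkn)
    (by exact_mod_cast Nat.choose_pos (by omega))]
  exact_mod_cast key
end

section
/- Let n, k, r be positive integers with (r+1) | n and k+1 ≤ n. Let R_1,…,R_{n/(r+1)} be a partition of {1,…,n} into blocks of size r+1 and 𝕊_{k+1} = {S ⊆ {1,…,n} : |S| = k+1, |S ∩ R_i| ≤ r ∀i}. Then |𝕊_{k+1}| = Σ_{j=0}^{⌊(k+1)/(r+1)⌋} (-1)^j · C(n/(r+1), j) · C(n - j(r+1), k+1 - j(r+1)). -/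
/-!
A set of size `m` violates the bound `|S ∩ R i| ≤ r` exactly when it contains the whole block
`R i`. Inclusion–exclusion over the set `t` of blocks contained in `S` reduces the count to the
number of `m`-sets containing `⋃ t`, a set of `|t| (r + 1)` points, which is
`C(n - |t| (r + 1), m - |t| (r + 1))` or `0`. Grouping the `t` by size produces `C(n / (r + 1), j)`,
and the terms with `j (r + 1) > m` vanish.
-/

open Finset Function

theorem sum_range_choose_smul_ite_le {M : Type*} [AddCommMonoid M] (N q : ℕ) (f : ℕ → M) :
    ∑ j ∈ range (N + 1), N.choose j • (if j ≤ q then f j else 0) =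
      ∑ j ∈ range (q + 1), N.choose j • f j := by
  calc ∑ j ∈ range (N + 1), N.choose j • (if j ≤ q then f j else 0)
      = ∑ j ∈ range (N + q + 1), N.choose j • (if j ≤ q then f j else 0) :=
        sum_subset (range_subset_range.2 (by omega)) fun j _ hj => by
          rw [Nat.choose_eq_zero_of_lt (by simp at hj; omega), zero_smul]
    _ = ∑ j ∈ range (q + 1), N.choose j • (if j ≤ q then f j else 0) :=
        (sum_subset (range_subset_range.2 (by omega)) fun j _ hj => by
          rw [if_neg (by simp at hj; omega), smul_zero]).symm
    _ = ∑ j ∈ range (q + 1), N.choose j • f j :=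
        sum_congr rfl fun j hj => by rw [if_pos (Nat.lt_succ_iff.1 (mem_range.1 hj))]

section

variable {α : Type*} [DecidableEq α]

theorem card_inter_lt_card_iff_not_subset {s t : Finset α} : #(s ∩ t) < #t ↔ ¬t ⊆ s := by
  rw [← inter_eq_right]
  exact ⟨fun h heq => h.ne (congrArg card heq),
    fun h => card_lt_card (inter_subset_right.ssubset_of_ne h)⟩

variable [Fintype α]

theorem card_filter_card_eq_and_subset (A : Finset α) {m : ℕ} (hA : #A ≤ m) :
    #{S : Finset α | #S = m ∧ A ⊆ S} = (Fintype.card α - #A).choose (m - #A) := by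
  rw [← card_compl, ← card_powersetCard]
  refine card_nbij' (· \ A) (· ∪ A) ?_ ?_ ?_ ?_
  · intro S hS
    simp only [coe_filter, mem_univ, true_and, Set.mem_ofPred_eq, mem_coe, mem_powersetCard] at hS ⊢
    exact ⟨fun x hx => by simpa using (mem_sdiff.1 hx).2, by rw [card_sdiff_of_subset hS.2, hS.1]⟩
  · intro T hT
    simp only [coe_filter, mem_univ, true_and, Set.mem_ofPred_eq, mem_coe, mem_powersetCard,
      subset_compl_iff_disjoint_right] at hT ⊢
    exact ⟨by rw [card_union_of_disjoint hT.1, hT.2]; omega, subset_union_right⟩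
  · intro S hS
    exact sdiff_union_of_subset (mem_filter.1 hS).2.2
  · intro T hT
    simp only [mem_coe, mem_powersetCard, subset_compl_iff_disjoint_right] at hT
    exact union_sdiff_cancel_right hT.1

theorem card_filter_card_eq_and_subset_of_lt (A : Finset α) {m : ℕ} (hA : m < #A) :
    #{S : Finset α | #S = m ∧ A ⊆ S} = 0 := by
  rw [card_eq_zero, filter_eq_empty_iff]
  rintro S - ⟨rfl, hAS⟩
  exact (card_le_card hAS).not_gt hA

variable {ι : Type*} [Fintype ι]

theorem card_filter_card_eq_and_forall_not_subset (R : ι → Finset α) (m : ℕ) :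
    (#{S : Finset α | #S = m ∧ ∀ i, ¬R i ⊆ S} : ℤ) =
      ∑ t : Finset ι, (-1 : ℤ) ^ #t * #{S : Finset α | #S = m ∧ t.biUnion R ⊆ S} := by
  let contains (i : ι) : Finset (Finset α) := {S | R i ⊆ S}
  let indicator (S : Finset α) : ℤ := if #S = m then 1 else 0
  calc (#{S : Finset α | #S = m ∧ ∀ i, ¬R i ⊆ S} : ℤ)
      = ∑ S ∈ univ.inf fun i => (contains i)ᶜ, indicator S := by
        rw [sum_boole]
        congr 2
        ext S
        simp [contains, mem_inf, and_comm]
    _ = ∑ t ∈ univ.powerset, (-1) ^ #t • ∑ S ∈ t.inf contains, indicator S :=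
        inclusion_exclusion_sum_inf_compl _ _ _
    _ = _ := by
        rw [powerset_univ]
        refine sum_congr rfl fun t _ => ?_
        rw [sum_boole, smul_eq_mul]
        congr 3
        ext S
        simp [contains, mem_inf, and_comm]

theorem card_filter_card_eq_and_forall_not_subset_of_pairwise_disjoint {R : ι → Finset α}
    (hR : Pairwise (Disjoint on R)) {b : ℕ} (hb : 0 < b) (hRb : ∀ i, #(R i) = b) (m : ℕ) :
    (#{S : Finset α | #S = m ∧ ∀ i, ¬R i ⊆ S} : ℤ) =
      ∑ j ∈ range (m / b + 1), (-1 : ℤ) ^ j * (Fintype.card ι).choose j *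
        (Fintype.card α - j * b).choose (m - j * b) := by
  let term (j : ℕ) : ℤ :=
    if j ≤ m / b then (-1) ^ j * (Fintype.card α - j * b).choose (m - j * b) else 0
  have hcount (t : Finset ι) :
      (-1 : ℤ) ^ #t * #{S : Finset α | #S = m ∧ t.biUnion R ⊆ S} = term #t := by
    have hcard : #(t.biUnion R) = #t * b := by
      rw [card_biUnion (hR.set_pairwise _), sum_const_nat fun i _ => hRb i]
    simp only [term]
    by_cases h : #t * b ≤ m
    · rw [if_pos ((Nat.le_div_iff_mul_le hb).2 h), card_filter_card_eq_and_subset _ (hcard ▸ h),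
        hcard]
    · rw [if_neg (mt (Nat.le_div_iff_mul_le hb).1 h),
        card_filter_card_eq_and_subset_of_lt _ (hcard ▸ not_le.1 h), Nat.cast_zero, mul_zero]
  calc (#{S : Finset α | #S = m ∧ ∀ i, ¬R i ⊆ S} : ℤ)
      = ∑ t ∈ (univ : Finset ι).powerset, term #t := by
        rw [card_filter_card_eq_and_forall_not_subset, powerset_univ]
        exact sum_congr rfl fun t _ => hcount t
    _ = ∑ j ∈ range (Fintype.card ι + 1), (Fintype.card ι).choose j • term j := by
        rw [sum_powerset_apply_card, card_univ]
    _ = ∑ j ∈ range (m / b + 1), (Fintype.card ι).choose j •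
          ((-1 : ℤ) ^ j * (Fintype.card α - j * b).choose (m - j * b)) :=
        sum_range_choose_smul_ite_le _ _ _
    _ = _ := sum_congr rfl fun j _ => by rw [nsmul_eq_mul]; ring

end

theorem S_k1_inclusion_exclusion_general (n k r : ℕ)
    (R : Fin (n / (r + 1)) → Finset (Fin n))
    (hdisj : ∀ i j, i ≠ j → Disjoint (R i) (R j))
    (hsize : ∀ i, (R i).card = r + 1) :
    (((Finset.univ : Finset (Finset (Fin n))).filter
        (fun S => S.card = k + 1 ∧ ∀ i, (S ∩ R i).card ≤ r)).card : ℤ) =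
      ∑ j ∈ Finset.range ((k + 1) / (r + 1) + 1),
        (-1 : ℤ) ^ j * Nat.choose (n / (r + 1)) j *
          Nat.choose (n - j * (r + 1)) (k + 1 - j * (r + 1)) := by
  have hblock (S : Finset (Fin n)) (i) : (S ∩ R i).card ≤ r ↔ ¬R i ⊆ S := by
    rw [← card_inter_lt_card_iff_not_subset, hsize, Nat.lt_succ_iff]
  convert card_filter_card_eq_and_forall_not_subset_of_pairwise_disjoint hdisj r.add_one_pos hsize
    (k + 1) using 3
  · ext S
    simp only [mem_filter, hblock]
  all_goals rw [Fintype.card_fin]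

theorem S_k1_inclusion_exclusion (n k r : ℕ)
    (hn : 0 < n) (hk : 0 < k) (hr : 0 < r)
    (hdvd : (r + 1) ∣ n) (hkn : k + 1 ≤ n)
    (R : Fin (n / (r + 1)) → Finset (Fin n))
    (hcover : Finset.univ.biUnion R = Finset.univ)
    (hdisj : ∀ i j, i ≠ j → Disjoint (R i) (R j))
    (hsize : ∀ i, (R i).card = r + 1) :
    (((Finset.univ : Finset (Finset (Fin n))).filter
        (fun S => S.card = k + 1 ∧ ∀ i, (S ∩ R i).card ≤ r)).card : ℤ) =
      ∑ j ∈ Finset.range ((k + 1) / (r + 1) + 1),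
        (-1 : ℤ) ^ j * Nat.choose (n / (r + 1)) j *
          Nat.choose (n - j * (r + 1)) (k + 1 - j * (r + 1)) :=
  S_k1_inclusion_exclusion_general n k r R hdisj hsize
end
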